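/- Let n ≥ 1, let Φ and Ψ be Young functions, and let ρ:(0,∞)→(0,∞) be increasing such that r ↦ r^{−n}ρ(r) is decreasing. Assume there is a constant C > 0 with ρ(r) ≤ C Ψ^{-1}(r^{-n}) / Φ^{-1}(r^{-n}) for all r > 0. Then for any constant C₀ > 0 there exists C₁ > 0 such that for every f ∈ L^Φ(ℝⁿ) with f ≠ 0 and every x ∈ ℝⁿ: M_ρ f(x) ≤ C₁ ‖f‖_{L^Φ} · Ψ^{-1}( Φ( Mf(x) / (C₀‖f‖_{L^Φ}) ) ). -/

import Mathlib

open MeasureTheory Metric Set Filter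
open scoped ENNReal NNReal Topology

noncomputable section

/-- A Young function `Φ : [0,∞] → [0,∞]`: convex, left-continuous, vanishing (with limit `0`)
at `0`, and equal (with limit) to `∞` at `∞`. -/
structure IsYoung (Φ : ℝ≥0∞ → ℝ≥0∞) : Prop where
  map_zero : Φ 0 = 0
  convex : ∀ p q x y : ℝ≥0∞, p + q = 1 → Φ (p * x + q * y) ≤ p * Φ x + q * Φ y
  left_continuous : ∀ r : ℝ≥0∞, Φ r = ⨆ s ∈ Set.Iio r, Φ s
  tendsto_zero : Filter.Tendsto Φ (nhdsWithin 0 (Set.Ioi 0)) (nhds 0)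
  map_top : Φ ⊤ = ⊤
  tendsto_top : Filter.Tendsto (fun r : ℝ≥0 => Φ (r : ℝ≥0∞)) Filter.atTop (nhds ⊤)

/-- The generalized (O'Neil) inverse `Φ⁻¹(s) = inf {r ≥ 0 : Φ(r) > s}` (with `inf ∅ = ∞`). -/
def yInv (Φ : ℝ≥0∞ → ℝ≥0∞) (s : ℝ≥0∞) : ℝ≥0∞ := sInf {r : ℝ≥0∞ | s < Φ r}

/-- `r^{-n}` as an extended nonnegative real. -/
def rinv (n : ℕ) (r : ℝ) : ℝ≥0∞ := ENNReal.ofReal ((r ^ n)⁻¹)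

variable {α : Type*}

/-- Luxemburg (quasi-)norm of an `ℝ≥0∞`-valued function. -/
def luxNorm (Φ : ℝ≥0∞ → ℝ≥0∞) [MeasurableSpace α] (μ : Measure α) (g : α → ℝ≥0∞) : ℝ≥0∞ :=
  sInf {lam : ℝ≥0∞ | 0 < lam ∧ lam ≠ ⊤ ∧ (∫⁻ x, Φ (g x / lam) ∂μ) ≤ 1}

/-- Weak Luxemburg quasi-norm: `sup_{λ>0} ‖λ χ_{{g>λ}}‖_{L^Φ}`. -/
def wluxNorm (Φ : ℝ≥0∞ → ℝ≥0∞) [MeasurableSpace α] (μ : Measure α) (g : α → ℝ≥0∞) : ℝ≥0∞ :=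
  ⨆ (lam : ℝ≥0∞) (_ : 0 < lam) (_ : lam ≠ ⊤),
    luxNorm Φ μ (({x | lam < g x}).indicator (fun _ => lam))

/-- `|f|` regarded as an `ℝ≥0∞`-valued function. -/
def enn (f : α → ℝ) : α → ℝ≥0∞ := fun x => (‖f x‖₊ : ℝ≥0∞)

/-- Euclidean space `ℝⁿ`. -/
abbrev Euc (n : ℕ) := EuclideanSpace ℝ (Fin n)

/-- The generalized fractional integral operator `I_ρ`. -/
def Irho (n : ℕ) (ρ : ℝ → ℝ) (f : Euc n → ℝ) (x : Euc n) : ℝ :=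
  ∫ y, (ρ (dist x y) / (dist x y) ^ n) * f y

/-- The Hardy–Littlewood maximal operator. -/
def maxOp (n : ℕ) (f : Euc n → ℝ) (x : Euc n) : ℝ≥0∞ :=
  ⨆ (r : ℝ) (_ : 0 < r), (volume (ball x r))⁻¹ * ∫⁻ y in ball x r, (‖f y‖₊ : ℝ≥0∞)

/-- The generalized fractional maximal operator `M_ρ`. -/
def Mrho (n : ℕ) (ρ : ℝ → ℝ) (f : Euc n → ℝ) (x : Euc n) : ℝ≥0∞ :=
  ⨆ (r : ℝ) (_ : 0 < r),
    ENNReal.ofReal (ρ r) * ((volume (ball x r))⁻¹ * ∫⁻ y in ball x r, (‖f y‖₊ : ℝ≥0∞))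

/-- The `∇₂` condition: `Φ(r) ≤ (1/(2C)) Φ(C r)` for some `C > 1`. -/
def Nabla2 (Φ : ℝ≥0∞ → ℝ≥0∞) : Prop :=
  ∃ C : ℝ, 1 < C ∧ ∀ r : ℝ≥0∞, Φ r ≤ ENNReal.ofReal (1 / (2 * C)) * Φ (ENNReal.ofReal C * r)

/-- `∫₀¹ ρ(t)/t dt < ∞`. -/
def RhoInt (ρ : ℝ → ℝ) : Prop :=
  (∫⁻ t in Set.Ioo (0:ℝ) 1, ENNReal.ofReal (ρ t / t)) < ⊤

/-- `sup_{r/2 ≤ t ≤ r} ρ(t) ≤ C ∫_{k₁ r}^{k₂ r} ρ(t)/t dt` for all `r > 0`. -/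
def RhoSupWith (ρ : ℝ → ℝ) (C k₁ k₂ : ℝ) : Prop :=
  0 < C ∧ 0 < k₁ ∧ k₁ < k₂ ∧ ∀ r > (0:ℝ), ∀ t ∈ Set.Icc (r / 2) r,
    ENNReal.ofReal (ρ t) ≤
      ENNReal.ofReal C * ∫⁻ s in Set.Ioo (k₁ * r) (k₂ * r), ENNReal.ofReal (ρ s / s)

def RhoSup (ρ : ℝ → ℝ) : Prop := ∃ C k₁ k₂ : ℝ, RhoSupWith ρ C k₁ k₂

/-- The condition
`Φ⁻¹(r^{-n}) ∫₀^r ρ(t)/t dt + ∫_r^∞ ρ(t) Φ⁻¹(t^{-n}) dt/t ≤ C Ψ⁻¹(r^{-n})`. -/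
def CondOrl (n : ℕ) (Φ Ψ : ℝ≥0∞ → ℝ≥0∞) (ρ : ℝ → ℝ) : Prop :=
  ∃ C : ℝ, 0 < C ∧ ∀ r > (0:ℝ),
    yInv Φ (rinv n r) * (∫⁻ t in Set.Ioo (0:ℝ) r, ENNReal.ofReal (ρ t / t))
      + (∫⁻ t in Set.Ioi r, ENNReal.ofReal (ρ t / t) * yInv Φ (rinv n t))
    ≤ ENNReal.ofReal C * yInv Ψ (rinv n r)

/-- Generalized Orlicz–Morrey norm (third kind). -/
def morNorm (n : ℕ) (Φ : ℝ≥0∞ → ℝ≥0∞) (φ : ℝ → ℝ≥0∞) (g : Euc n → ℝ≥0∞) : ℝ≥0∞ :=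
  ⨆ (x : Euc n) (r : ℝ) (_ : 0 < r),
    (φ r)⁻¹ * yInv Φ (rinv n r) * luxNorm Φ volume ((ball x r).indicator g)

/-- Weak generalized Orlicz–Morrey norm (third kind). -/
def wMorNorm (n : ℕ) (Φ : ℝ≥0∞ → ℝ≥0∞) (φ : ℝ → ℝ≥0∞) (g : Euc n → ℝ≥0∞) : ℝ≥0∞ :=
  ⨆ (x : Euc n) (r : ℝ) (_ : 0 < r),
    (φ r)⁻¹ * yInv Φ (rinv n r) * wluxNorm Φ volume ((ball x r).indicator g)

/-- A real positive function regarded as `ℝ≥0∞`-valued. -/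
def ofR (φ : ℝ → ℝ) : ℝ → ℝ≥0∞ := fun t => ENNReal.ofReal (φ t)

/-- Almost increasing (on `(0,∞)`). -/
def AlmostInc (g : ℝ → ℝ≥0∞) : Prop :=
  ∃ C : ℝ, 0 < C ∧ ∀ r s : ℝ, 0 < r → r ≤ s → g r ≤ ENNReal.ofReal C * g s

/-- Almost decreasing (on `(0,∞)`). -/
def AlmostDec (g : ℝ → ℝ≥0∞) : Prop :=
  ∃ C : ℝ, 0 < C ∧ ∀ r s : ℝ, 0 < r → r ≤ s → ENNReal.ofReal C * g s ≤ g r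

/-- The class `G_Φ`: `φ` is positive, `t ↦ φ(t)/Φ⁻¹(t^{-n})` is almost increasing and
`t ↦ φ(t)/(Φ⁻¹(t^{-n}) tⁿ)` is almost decreasing. -/
def GPhi (n : ℕ) (Φ : ℝ≥0∞ → ℝ≥0∞) (φ : ℝ → ℝ) : Prop :=
  (∀ t > (0:ℝ), 0 < φ t) ∧
  AlmostInc (fun t => ENNReal.ofReal (φ t) / yInv Φ (rinv n t)) ∧
  AlmostDec (fun t => ENNReal.ofReal (φ t) / (yInv Φ (rinv n t) * ENNReal.ofReal (t ^ n)))

/-!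
Split the supremum defining `M_ρ f(x)` at a radius `r₀` for which `Φ⁻¹(r₀⁻ⁿ)` dominates
`t = Mf(x) / (C₀ ‖f‖)`. For `r ≤ r₀` the monotonicity of `ρ` bounds `ρ(r) ⨍_{B(x,r)} |f|` by
`ρ(r₀) Φ⁻¹(r₀⁻ⁿ) C₀ ‖f‖ ≲ Ψ⁻¹(r₀⁻ⁿ) ‖f‖`. For `r ≥ r₀`, Young's inequality
`u s ≤ Φ⁻¹(s) (s + Φ(u))` integrated over the ball gives `⨍_{B(x,r)} |f| ≲ Φ⁻¹(r⁻ⁿ) ‖f‖`, and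
`ρ(r) Φ⁻¹(r⁻ⁿ) ≲ Ψ⁻¹(r⁻ⁿ) ≤ Ψ⁻¹(r₀⁻ⁿ)`. Finally let `r₀⁻ⁿ` decrease to `Φ(t)`: the generalized
inverse `Ψ⁻¹` is right-continuous.
-/

namespace IsYoung

variable {Φ : ℝ≥0∞ → ℝ≥0∞}

theorem apply_mul_le (hΦ : IsYoung Φ) {p u : ℝ≥0∞} (hp : p ≤ 1) : Φ (p * u) ≤ p * Φ u := by
  simpa [hΦ.map_zero] using hΦ.convex p (1 - p) u 0 (add_tsub_cancel_of_le hp)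

theorem apply_le_div_mul (hΦ : IsYoung Φ) {u w : ℝ≥0∞} (hu0 : u ≠ 0) (huT : u ≠ ⊤)
    (hwu : w ≤ u) : Φ w ≤ w / u * Φ u := by
  have h := hΦ.apply_mul_le (p := w / u) (u := u) (ENNReal.div_le_of_le_mul (by rwa [one_mul]))
  rwa [ENNReal.div_mul_cancel hu0 huT] at h

theorem monotone (hΦ : IsYoung Φ) : Monotone Φ := by
  intro u v huv
  rcases eq_or_ne v 0 with rfl | hv0
  · rw [nonpos_iff_eq_zero.mp huv]
  rcases eq_or_ne v ⊤ with rfl | hvT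
  · simp [hΦ.map_top]
  calc Φ u ≤ u / v * Φ v := hΦ.apply_le_div_mul hv0 hvT huv
    _ ≤ Φ v := mul_le_of_le_one_left' (ENNReal.div_le_of_le_mul (by rwa [one_mul]))

theorem le_yInv {u s : ℝ≥0∞} (hΦ : IsYoung Φ) (h : Φ u ≤ s) : u ≤ yInv Φ s :=
  le_sInf fun _ hr => le_of_not_gt fun hru => (hr.trans_le ((hΦ.monotone hru.le).trans h)).false

theorem lt_apply_of_yInv_lt (hΦ : IsYoung Φ) {s w : ℝ≥0∞} (h : yInv Φ s < w) : s < Φ w := by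
  obtain ⟨r, hr, hrw⟩ := sInf_lt_iff.mp h
  exact hr.trans_le (hΦ.monotone hrw.le)

theorem yInv_ne_top (hΦ : IsYoung Φ) {s : ℝ≥0∞} (hs : s ≠ ⊤) : yInv Φ s ≠ ⊤ := by
  obtain ⟨r, hr⟩ := (hΦ.tendsto_top.eventually (eventually_gt_nhds hs.lt_top)).exists
  exact ne_top_of_le_ne_top ENNReal.coe_ne_top (sInf_le hr)

theorem yInv_ne_zero (hΦ : IsYoung Φ) {s : ℝ≥0∞} (hs : s ≠ 0) : yInv Φ s ≠ 0 := by
  intro h0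
  obtain ⟨w, hw, hw0⟩ := ((hΦ.tendsto_zero.eventually (gt_mem_nhds (pos_iff_ne_zero.mpr hs))).and
    self_mem_nhdsWithin).exists
  exact (hΦ.lt_apply_of_yInv_lt (h0 ▸ hw0 : yInv Φ s < w)).not_gt hw

theorem mul_le_yInv_mul_add (hΦ : IsYoung Φ) {s : ℝ≥0∞} (hs : s ≠ 0) (u : ℝ≥0∞) :
    u * s ≤ yInv Φ s * (s + Φ u) := by
  set v := yInv Φ s
  rcases le_or_gt u v with huv | hvu
  · exact mul_le_mul' huv le_self_add
  refine le_trans ?_ (mul_le_mul_right le_add_self v)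
  have hv0 : v ≠ 0 := hΦ.yInv_ne_zero hs
  rcases eq_or_ne u ⊤ with rfl | huT
  · simp [hΦ.map_top, ENNReal.mul_top hv0]
  have hu0 : u ≠ 0 := (pos_of_gt hvu).ne'
  have hΦu0 : Φ u ≠ 0 := (pos_of_gt (hΦ.lt_apply_of_yInv_lt hvu)).ne'
  -- convexity gives `s < Φ w ≤ (w / u) Φ u` for every `w ∈ (v, u]`; let `w` decrease to `v`
  have hw : ∀ w ∈ Ioc v u, u * s / Φ u ≤ w := by
    rintro w ⟨hvw, hwu⟩
    rw [ENNReal.div_le_iff_le_mul (Or.inl hΦu0) (Or.inr (pos_of_gt hvw).ne')]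
    calc u * s ≤ u * (w / u * Φ u) := mul_le_mul_right
          ((hΦ.lt_apply_of_yInv_lt hvw).le.trans (hΦ.apply_le_div_mul hu0 huT hwu)) u
      _ = w * Φ u := by rw [← mul_assoc, ENNReal.mul_div_cancel hu0 huT]
  have := le_csInf (nonempty_Ioc.mpr hvu) hw
  rwa [csInf_Ioc hvu, ENNReal.div_le_iff_le_mul (Or.inl hΦu0) (Or.inr hv0)] at this

end IsYoung

theorem yInv_mono {Φ : ℝ≥0∞ → ℝ≥0∞} : Monotone (yInv Φ) :=
  fun _ _ h => sInf_le_sInf fun _ hr => h.trans_lt hr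

theorem yInv_eq_biInf_Ioo (Φ : ℝ≥0∞ → ℝ≥0∞) (s : ℝ≥0∞) :
    yInv Φ s = ⨅ ε ∈ Ioo s ⊤, yInv Φ ε := by
  refine le_antisymm (le_iInf₂ fun ε hε => yInv_mono hε.1.le) (le_sInf fun r hr => ?_)
  obtain ⟨ε, hsε, hεr⟩ := exists_between (show s < Φ r from hr)
  exact (iInf₂_le ε ⟨hsε, hεr.trans_le le_top⟩).trans (sInf_le hεr)

theorem le_mul_yInv_of_forall_lt {Φ : ℝ≥0∞ → ℝ≥0∞} {a b s : ℝ≥0∞} (hb0 : b ≠ 0) (hbT : b ≠ ⊤)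
    (h : ∀ ε, s < ε → ε < ⊤ → a ≤ b * yInv Φ ε) : a ≤ b * yInv Φ s := by
  rw [mul_comm, ← ENNReal.div_le_iff hb0 hbT, yInv_eq_biInf_Ioo]
  exact le_iInf₂ fun ε hε => (ENNReal.div_le_iff hb0 hbT).mpr (mul_comm b _ ▸ h ε hε.1 hε.2)

theorem rinv_ne_zero {n : ℕ} {r : ℝ} (hr : 0 < r) : rinv n r ≠ 0 :=
  ENNReal.ofReal_ne_zero_iff.mpr (by positivity)

theorem rinv_anti {n : ℕ} {r s : ℝ} (hr : 0 < r) (hrs : r ≤ s) : rinv n s ≤ rinv n r :=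
  ENNReal.ofReal_le_ofReal (inv_anti₀ (by positivity) (pow_le_pow_left₀ hr.le hrs n))

theorem exists_rinv_eq {n : ℕ} (hn : 1 ≤ n) {ξ : ℝ≥0∞} (h0 : ξ ≠ 0) (hT : ξ ≠ ⊤) :
    ∃ r : ℝ, 0 < r ∧ rinv n r = ξ := by
  have hξ : 0 < ξ.toReal := ENNReal.toReal_pos h0 hT
  refine ⟨(ξ.toReal⁻¹) ^ ((n : ℝ)⁻¹), by positivity, ?_⟩
  rw [rinv, Real.rpow_inv_natCast_pow (by positivity) (by omega), inv_inv, ENNReal.ofReal_toReal hT]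

theorem one_add_inv_volume_ball_ne_top (n : ℕ) : 1 + (volume (ball (0 : Euc n) 1))⁻¹ ≠ ⊤ :=
  ENNReal.add_ne_top.mpr
    ⟨ENNReal.one_ne_top, ENNReal.inv_ne_top.mpr (measure_ball_pos _ _ one_pos).ne'⟩

theorem inv_volume_ball {n : ℕ} (x : Euc n) {r : ℝ} (hr : 0 < r) :
    (volume (ball x r))⁻¹ = rinv n r * (volume (ball (0 : Euc n) 1))⁻¹ := by
  rw [Measure.addHaar_ball_of_pos volume x hr, finrank_euclideanSpace_fin,
    ENNReal.mul_inv (Or.inr measure_ball_lt_top.ne) (Or.inl ENNReal.ofReal_ne_top), rinv,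
    ENNReal.ofReal_inv_of_pos (by positivity)]

theorem rinv_mul_volume_ball {n : ℕ} (x : Euc n) {r : ℝ} (hr : 0 < r) :
    rinv n r * volume (ball x r) = volume (ball (0 : Euc n) 1) := by
  rw [Measure.addHaar_ball_of_pos volume x hr, finrank_euclideanSpace_fin, ← mul_assoc, rinv,
    ← ENNReal.ofReal_mul (by positivity), inv_mul_cancel₀ (by positivity), ENNReal.ofReal_one,
    one_mul]

/-- `maxOp` and `Mrho` are, definitionally, suprema of (weighted) ball averages. -/
def ballAvg {n : ℕ} (f : Euc n → ℝ) (x : Euc n) (r : ℝ) : ℝ≥0∞ :=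
  (volume (ball x r))⁻¹ * ∫⁻ y in ball x r, (‖f y‖₊ : ℝ≥0∞)

section BallAverage

variable {n : ℕ} {Φ : ℝ≥0∞ → ℝ≥0∞} {f : Euc n → ℝ} {x : Euc n} {r : ℝ}

theorem ballAvg_le_maxOp (hr : 0 < r) : ballAvg f x r ≤ maxOp n f x :=
  le_iSup₂ (f := fun r (_ : 0 < r) => ballAvg f x r) r hr

theorem ballAvg_le_of_lintegral_le_one (hΦ : IsYoung Φ) (hr : 0 < r) {lam : ℝ≥0∞}
    (hl0 : lam ≠ 0) (hlT : lam ≠ ⊤) (hint : ∫⁻ y, Φ (enn f y / lam) ≤ 1) :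
    ballAvg f x r ≤ lam * ((1 + (volume (ball (0 : Euc n) 1))⁻¹) * yInv Φ (rinv n r)) := by
  set c := volume (ball (0 : Euc n) 1)
  set s := rinv n r
  set Y := yInv Φ s
  set g : Euc n → ℝ≥0∞ := fun y => enn f y / lam
  have hf : ∫⁻ y in ball x r, (‖f y‖₊ : ℝ≥0∞) = lam * ∫⁻ y in ball x r, g y := by
    rw [← lintegral_const_mul' lam _ hlT]
    exact setLIntegral_congr_fun measurableSet_ball fun y _ =>
      (ENNReal.mul_div_cancel hl0 hlT).symm
  have hg : (∫⁻ y in ball x r, g y) * s ≤ Y * (c + 1) :=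
    calc (∫⁻ y in ball x r, g y) * s = ∫⁻ y in ball x r, g y * s :=
          (lintegral_mul_const' s _ ENNReal.ofReal_ne_top).symm
      _ ≤ ∫⁻ y in ball x r, Y * (s + Φ (g y)) :=
          lintegral_mono fun y => hΦ.mul_le_yInv_mul_add (rinv_ne_zero hr) (g y)
      _ = Y * (s * volume (ball x r) + ∫⁻ y in ball x r, Φ (g y)) := by
          rw [lintegral_const_mul' Y _ (hΦ.yInv_ne_top ENNReal.ofReal_ne_top),
            lintegral_add_left measurable_const, setLIntegral_const]
      _ ≤ Y * (c + 1) := by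
          rw [rinv_mul_volume_ball x hr]
          gcongr
          exact (setLIntegral_le_lintegral _ _).trans hint
  calc ballAvg f x r = c⁻¹ * lam * ((∫⁻ y in ball x r, g y) * s) := by
        rw [ballAvg, inv_volume_ball x hr, hf]; ring
    _ ≤ c⁻¹ * lam * (Y * (c + 1)) := by gcongr
    _ = lam * ((c⁻¹ * c + c⁻¹) * Y) := by ring
    _ = lam * ((1 + c⁻¹) * Y) := by
        rw [ENNReal.inv_mul_cancel (measure_ball_pos _ _ one_pos).ne' measure_ball_lt_top.ne]

theorem ballAvg_le_luxNorm (hΦ : IsYoung Φ) (hr : 0 < r) :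
    ballAvg f x r ≤
      (1 + (volume (ball (0 : Euc n) 1))⁻¹) * yInv Φ (rinv n r) * luxNorm Φ volume (enn f) := by
  set K := (1 + (volume (ball (0 : Euc n) 1))⁻¹) * yInv Φ (rinv n r)
  have hK0 : K ≠ 0 := mul_ne_zero (by simp) (hΦ.yInv_ne_zero (rinv_ne_zero hr))
  have hKT : K ≠ ⊤ :=
    ENNReal.mul_ne_top (one_add_inv_volume_ball_ne_top n) (hΦ.yInv_ne_top ENNReal.ofReal_ne_top)
  rw [mul_comm, ← ENNReal.div_le_iff hK0 hKT]
  refine le_sInf fun lam ⟨hl0, hlT, hint⟩ => (ENNReal.div_le_iff hK0 hKT).mpr ?_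
  exact ballAvg_le_of_lintegral_le_one hΦ hr hl0.ne' hlT hint

theorem Mrho_eq_zero_of_luxNorm_eq_zero (hΦ : IsYoung Φ) (ρ : ℝ → ℝ)
    (h : luxNorm Φ volume (enn f) = 0) : Mrho n ρ f x = 0 := by
  refine ENNReal.iSup_eq_zero.mpr fun r => ENNReal.iSup_eq_zero.mpr fun hr => ?_
  have := ballAvg_le_luxNorm (f := f) (x := x) hΦ hr
  rw [h, mul_zero, nonpos_iff_eq_zero] at this
  exact mul_eq_zero_of_right _ this

theorem Mrho_le_of_maxOp_le (hΦ : IsYoung Φ) {Ψ : ℝ≥0∞ → ℝ≥0∞} {ρ : ℝ → ℝ}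
    (hmono : ∀ s t : ℝ, 0 < s → s ≤ t → ρ s ≤ ρ t) {C : ℝ≥0∞}
    (hρ : ∀ r > 0, ENNReal.ofReal (ρ r) * yInv Φ (rinv n r) ≤ C * yInv Ψ (rinv n r))
    {r₀ : ℝ} (hr₀ : 0 < r₀) {a : ℝ≥0∞} (ha : maxOp n f x ≤ a * yInv Φ (rinv n r₀)) :
    Mrho n ρ f x ≤
      C * (a + (1 + (volume (ball (0 : Euc n) 1))⁻¹) * luxNorm Φ volume (enn f)) *
        yInv Ψ (rinv n r₀) := by
  set K := 1 + (volume (ball (0 : Euc n) 1))⁻¹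
  set N := luxNorm Φ volume (enn f)
  refine iSup₂_le fun r hr => ?_
  change ENNReal.ofReal (ρ r) * ballAvg f x r ≤ _
  rcases le_total r r₀ with hrr | hrr
  · calc ENNReal.ofReal (ρ r) * ballAvg f x r
          ≤ ENNReal.ofReal (ρ r₀) * (a * yInv Φ (rinv n r₀)) :=
          mul_le_mul' (ENNReal.ofReal_le_ofReal (hmono r r₀ hr hrr))
            ((ballAvg_le_maxOp hr).trans ha)
      _ = a * (ENNReal.ofReal (ρ r₀) * yInv Φ (rinv n r₀)) := by ring
      _ ≤ a * (C * yInv Ψ (rinv n r₀)) := mul_le_mul_right (hρ r₀ hr₀) a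
      _ ≤ C * (a + K * N) * yInv Ψ (rinv n r₀) := by
          rw [mul_left_comm, ← mul_assoc]; gcongr; exact le_self_add
  · calc ENNReal.ofReal (ρ r) * ballAvg f x r
          ≤ ENNReal.ofReal (ρ r) * (K * yInv Φ (rinv n r) * N) := by
          gcongr; exact ballAvg_le_luxNorm hΦ hr
      _ = K * N * (ENNReal.ofReal (ρ r) * yInv Φ (rinv n r)) := by ring
      _ ≤ K * N * (C * yInv Ψ (rinv n r₀)) := mul_le_mul_right
          ((hρ r hr).trans (mul_le_mul_right (yInv_mono (rinv_anti hr₀ hrr)) C)) _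
      _ ≤ C * (a + K * N) * yInv Ψ (rinv n r₀) := by
          rw [mul_left_comm, ← mul_assoc]; gcongr; exact le_add_self

end BallAverage

theorem stmt6_general (n : ℕ) (hn : 1 ≤ n) (Φ Ψ : ℝ≥0∞ → ℝ≥0∞)
    (hΦ : IsYoung Φ) (ρ : ℝ → ℝ)
    (hmono : ∀ s t : ℝ, 0 < s → s ≤ t → ρ s ≤ ρ t)
    (hcond : ∃ C : ℝ, 0 < C ∧ ∀ r > (0:ℝ),
      ENNReal.ofReal (ρ r) ≤ ENNReal.ofReal C * (yInv Ψ (rinv n r) / yInv Φ (rinv n r))) :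
    ∀ C₀ : ℝ, 0 < C₀ → ∃ C₁ : ℝ, 0 < C₁ ∧ ∀ f : Euc n → ℝ, Measurable f →
      luxNorm Φ volume (enn f) ≠ ⊤ → ¬ (f =ᵐ[volume] 0) →
      ∀ x : Euc n,
        Mrho n ρ f x ≤
          ENNReal.ofReal C₁ * luxNorm Φ volume (enn f) *
            yInv Ψ (Φ (maxOp n f x / (ENNReal.ofReal C₀ * luxNorm Φ volume (enn f)))) := by
  intro C₀ hC₀
  obtain ⟨C, hC, hρ⟩ := hcond
  set K := 1 + (volume (ball (0 : Euc n) 1))⁻¹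
  have hKT : K ≠ ⊤ := one_add_inv_volume_ball_ne_top n
  refine ⟨C * (C₀ + K.toReal), by positivity, fun f _ hNT _ x => ?_⟩
  set N := luxNorm Φ volume (enn f)
  rcases eq_or_ne N 0 with hN0 | hN0
  · rw [Mrho_eq_zero_of_luxNorm_eq_zero hΦ ρ hN0]; exact zero_le
  set d := ENNReal.ofReal C₀ * N
  have hd0 : d ≠ 0 := mul_ne_zero (ENNReal.ofReal_pos.mpr hC₀).ne' hN0
  have hdT : d ≠ ⊤ := ENNReal.mul_ne_top ENNReal.ofReal_ne_top hNT
  have hρ' : ∀ r > 0, ENNReal.ofReal (ρ r) * yInv Φ (rinv n r) ≤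
      ENNReal.ofReal C * yInv Ψ (rinv n r) := fun r hr =>
    (mul_le_mul_left (hρ r hr) _).trans <| by
      rw [mul_assoc, mul_comm (_ / _)]; exact mul_le_mul_right ENNReal.mul_div_le _
  have hC₁ : ENNReal.ofReal (C * (C₀ + K.toReal)) * N = ENNReal.ofReal C * (d + K * N) := by
    rw [ENNReal.ofReal_mul hC.le, ENNReal.ofReal_add hC₀.le ENNReal.toReal_nonneg,
      ENNReal.ofReal_toReal hKT]; ring
  rw [hC₁]
  refine le_mul_yInv_of_forall_lt ?_ ?_ fun ε hε hεT => ?_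
  · exact mul_ne_zero (ENNReal.ofReal_pos.mpr hC).ne' fun h => hd0 (add_eq_zero.mp h).1
  · exact ENNReal.mul_ne_top ENNReal.ofReal_ne_top (ENNReal.add_ne_top.mpr
      ⟨hdT, ENNReal.mul_ne_top hKT hNT⟩)
  obtain ⟨r₀, hr₀, rfl⟩ := exists_rinv_eq hn (pos_of_gt hε).ne' hεT.ne
  refine Mrho_le_of_maxOp_le hΦ hmono hρ' hr₀ ?_
  rw [mul_comm, ← ENNReal.div_le_iff hd0 hdT]
  exact hΦ.le_yInv hε.le

/-- Hedberg-type pointwise estimate for `M_ρ`. -/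
theorem stmt6 (n : ℕ) (hn : 1 ≤ n) (Φ Ψ : ℝ≥0∞ → ℝ≥0∞)
    (hΦ : IsYoung Φ) (hΨ : IsYoung Ψ)
    (ρ : ℝ → ℝ) (hρpos : ∀ t > (0:ℝ), 0 < ρ t)
    (hmono : ∀ s t : ℝ, 0 < s → s ≤ t → ρ s ≤ ρ t)
    (hdec : ∀ s t : ℝ, 0 < s → s ≤ t → ρ t / t ^ n ≤ ρ s / s ^ n)
    (hcond : ∃ C : ℝ, 0 < C ∧ ∀ r > (0:ℝ),
      ENNReal.ofReal (ρ r) ≤ ENNReal.ofReal C * (yInv Ψ (rinv n r) / yInv Φ (rinv n r))) :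
    ∀ C₀ : ℝ, 0 < C₀ → ∃ C₁ : ℝ, 0 < C₁ ∧ ∀ f : Euc n → ℝ, Measurable f →
      luxNorm Φ volume (enn f) ≠ ⊤ → ¬ (f =ᵐ[volume] 0) →
      ∀ x : Euc n,
        Mrho n ρ f x ≤
          ENNReal.ofReal C₁ * luxNorm Φ volume (enn f) *
            yInv Ψ (Φ (maxOp n f x / (ENNReal.ofReal C₀ * luxNorm Φ volume (enn f)))) :=
  stmt6_general n hn Φ Ψ hΦ ρ hmono hcond
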